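/- For every parameter p with 2/3 < p < 0.70237758, writing p₁ = α_p(p) and p₂ = α_p(p₁), one has (2p-1)/p₁ < 1 and 4(2p-1)² < p₂ (equivalently, 2(2p-1)/√(p₂) < 1). -/

import Mathlib

noncomputable section

/-- The folded belief dynamics `α_p : [1/2, 1] → ℝ`:
`α_p(t) = 2 - 3p + γ/t` if `t < 2/3` and `α_p(t) = 3p - 1 - γ/t` if `t ≥ 2/3`,
where `γ = 2p - 1`. -/
def alphaMap (p t : ℝ) : ℝ :=
  if t < 2/3 then 2 - 3*p + (2*p - 1)/t else 3*p - 1 - (2*p - 1)/t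

/-!
For `p ≥ 2/3` the first step uses the upper branch, `p₁ = (3p² - 3p + 1)/p`, and for `p < 4/5`
this lands below `2/3`, so `p₂ = 2 - 3p + γp/(3p² - 3p + 1)`. The bound `γ < p₁` is then
`(p - 1)² > 0`, and `4γ² < p₂` is the positivity of the quartic
`-48p⁴ + 87p³ - 59p² + 18p - 2`, whose root near `0.7` is `0.70237758…`; the quartic is
concave on `[2/3, 0.71]`, hence positive between `2/3` and that root.
-/

namespace alphaMap

variable {p t : ℝ}

lemma of_lt (ht : t < 2/3) : alphaMap p t = 2 - 3*p + (2*p - 1)/t := if_pos ht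

lemma of_ge (ht : 2/3 ≤ t) : alphaMap p t = 3*p - 1 - (2*p - 1)/t := if_neg (not_lt.2 ht)

lemma self_eq (hp : 2/3 ≤ p) : alphaMap p p = (3*p^2 - 3*p + 1)/p := by
  rw [of_ge hp]
  field_simp
  ring

lemma self_pos (hp : 2/3 ≤ p) : 0 < alphaMap p p := by
  rw [self_eq hp]
  exact div_pos (by nlinarith [sq_nonneg (p - 1/2)]) (by linarith)

lemma self_lt_two_thirds (hp : 2/3 ≤ p) (hp' : p < 4/5) : alphaMap p p < 2/3 := by
  rw [self_eq hp, div_lt_iff₀ (by linarith)]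
  nlinarith

lemma two_mul_sub_one_lt_self (hp : 2/3 ≤ p) (hp' : p < 1) : 2*p - 1 < alphaMap p p := by
  rw [self_eq hp, lt_div_iff₀ (by linarith)]
  nlinarith [mul_pos (sub_pos.2 hp') (sub_pos.2 hp')]

lemma iterate_two_eq (hp : 2/3 ≤ p) (hp' : p < 4/5) :
    alphaMap p (alphaMap p p) = 2 - 3*p + p*(2*p - 1)/(3*p^2 - 3*p + 1) := by
  rw [of_lt (self_lt_two_thirds hp hp'), self_eq hp]
  have : 3*p^2 - 3*p + 1 ≠ 0 := by nlinarith [sq_nonneg (p - 1/2)]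
  field_simp

end alphaMap

lemma quartic_pos {p : ℝ} (hp : 2/3 ≤ p) (hp' : p ≤ 0.70237758) :
    0 < -48*p^4 + 87*p^3 - 59*p^2 + 18*p - 2 := by
  nlinarith [mul_nonneg (sub_nonneg.2 hp) (sub_nonneg.2 hp'), sq_nonneg (p - 2/3),
    mul_nonneg (mul_nonneg (sub_nonneg.2 hp) (sub_nonneg.2 hp')) (by linarith : (0:ℝ) ≤ p)]

lemma four_mul_sq_lt_iterate_two {p : ℝ} (hp : 2/3 ≤ p) (hp' : p ≤ 0.70237758) :
    4*(2*p - 1)^2 < alphaMap p (alphaMap p p) := by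
  have hD : 0 < 3*p^2 - 3*p + 1 := by nlinarith [sq_nonneg (p - 1/2)]
  rw [alphaMap.iterate_two_eq hp (by linarith), ← sub_lt_iff_lt_add', lt_div_iff₀ hD]
  nlinarith [quartic_pos hp hp']

/-- For `2/3 < p < 0.70237758`, with `p₁ = α_p(p)` and `p₂ = α_p(p₁)`, one has
`γ/p₁ < 1` and `4γ² < p₂` (equivalently `2γ/√p₂ < 1`), where `γ = 2p-1`. -/
theorem spectral_radius_bounds_three_intervals (p : ℝ)
    (hp : 2/3 < p) (hp1 : p < 0.70237758) :
    (2*p - 1) / alphaMap p p < 1 ∧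
    4*(2*p - 1)^2 < alphaMap p (alphaMap p p) := by
  refine ⟨?_, four_mul_sq_lt_iterate_two hp.le hp1.le⟩
  rw [div_lt_one (alphaMap.self_pos hp.le)]
  exact alphaMap.two_mul_sub_one_lt_self hp.le (by linarith)
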